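/- Let θ₀ > 0 and τ = 2π/θ₀. Define, for each positive integer n, φ_n² = (∫₀ⁿ x²·cos²(θ₀x)·e^{sin(θ₀x)} dx)⁻¹ and J_n = φ_n⁴ ∫₀ⁿ x⁴·sin²(θ₀x)·e^{sin(θ₀x)} dx − (φ_n³ ∫₀ⁿ x³·sin(θ₀x)·cos(θ₀x) dx)². Then lim_{n→∞} n·J_n = (9τ/5)·(∫₀^τ sin²(θ₀x)·e^{sin(θ₀x)} dx)/(∫₀^τ cos²(θ₀x)·e^{sin(θ₀x)} dx)². -/

import Mathlib

/-!
Write `I_n, K_n, C_n` for the three integrals over `[0, n]` and `A, B` for the integrals over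
`[0, τ]`. Each of `I_n, K_n, C_n` has the form `∫₀ⁿ x^k f(x) dx` with `f` continuous and
`τ`-periodic. If `c` is the mean of `f` over a period, `f - c` has a bounded primitive, so an
integration by parts gives `∫₀ⁿ x^k f = c n^{k+1}/(k+1) + O(n^k)`. Hence `I_n ~ A n³/(3τ)`,
`K_n ~ B n⁵/(5τ)` and `C_n = o(n⁴)` (as `sin · cos` has mean zero), and
`n J_n = (n³/I_n)² (K_n/n⁵) - (n³/I_n)³ (C_n/n⁴)² → (3τ/A)² B/(5τ) = 9τB/(5A²)`.
-/

open MeasureTheory Set Filter intervalIntegral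
open scoped Topology

theorem Function.Periodic.exists_abs_intervalIntegral_le {g : ℝ → ℝ} {T : ℝ}
    (hg : Function.Periodic g T) (hT : 0 < T) (hgi : IntervalIntegrable g volume 0 T)
    (hmean : ∫ x in 0..T, g x = 0) :
    ∃ M, ∀ t, |∫ x in 0..t, g x| ≤ M := by
  set S := (fun t => ∫ x in 0..t, g x) '' Icc 0 T
  refine ⟨max |sInf S| |sSup S|, fun t => abs_le_max_abs_abs ?_ ?_⟩
  · simpa [hmean] using hg.sInf_add_zsmul_le_integral_of_pos hgi hT t
  · simpa [hmean] using hg.integral_le_sSup_add_zsmul_of_pos hgi hT t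

theorem abs_integral_pow_mul_le {g : ℝ → ℝ} {M t : ℝ} (hg : Continuous g)
    (hM : ∀ s, |∫ x in 0..s, g x| ≤ M) (k : ℕ) (ht : 0 ≤ t) :
    |∫ x in 0..t, x ^ k * g x| ≤ 2 * M * t ^ k := by
  set G : ℝ → ℝ := fun s => ∫ x in 0..s, g x
  have hG : ∀ x, HasDerivAt G (g x) x := fun x =>
    hg.integral_hasStrictDerivAt 0 x |>.hasDerivAt
  have hpow : ∀ x, HasDerivAt (fun x : ℝ => x ^ k) (k * x ^ (k - 1)) x := fun x => by
    simpa using hasDerivAt_pow k x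
  have hpow_int : IntervalIntegrable (fun x : ℝ => k * x ^ (k - 1)) volume 0 t := by
    apply Continuous.intervalIntegrable; fun_prop
  have parts : ∫ x in 0..t, x ^ k * g x = t ^ k * G t - ∫ x in 0..t, k * x ^ (k - 1) * G x := by
    rw [integral_mul_deriv_eq_deriv_mul (fun x _ => hpow x) (fun x _ => hG x) hpow_int
      (hg.intervalIntegrable _ _)]
    simp [G]
  have boundary : |t ^ k * G t| ≤ M * t ^ k := by
    rw [abs_mul, abs_of_nonneg (by positivity), mul_comm]
    exact mul_le_mul_of_nonneg_right (hM t) (by positivity)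
  have remainder : |∫ x in 0..t, k * x ^ (k - 1) * G x| ≤ M * t ^ k := by
    calc |∫ x in 0..t, k * x ^ (k - 1) * G x|
        ≤ ∫ x in 0..t, k * x ^ (k - 1) * M := by
          rw [← Real.norm_eq_abs]
          refine norm_integral_le_of_norm_le ht (ae_of_all _ fun x hx => ?_) (hpow_int.mul_const M)
          have : 0 ≤ (k : ℝ) * x ^ (k - 1) := by have := hx.1.le; positivity
          rw [Real.norm_eq_abs, abs_mul, abs_of_nonneg this]
          exact mul_le_mul_of_nonneg_left (hM x) this
      _ = M * (t ^ k - 0 ^ k) := by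
          rw [intervalIntegral.integral_mul_const,
            integral_eq_sub_of_hasDerivAt (fun x _ => hpow x) hpow_int, mul_comm]
      _ ≤ M * t ^ k :=
          mul_le_mul_of_nonneg_left (sub_le_self _ (by positivity)) ((abs_nonneg _).trans (hM 0))
  calc |∫ x in 0..t, x ^ k * g x| ≤ |t ^ k * G t| + |∫ x in 0..t, k * x ^ (k - 1) * G x| := by
        rw [parts]; exact abs_sub _ _
    _ ≤ 2 * M * t ^ k := by linarith

theorem Function.Periodic.tendsto_integral_pow_mul_div_pow_of_integral_eq_zero
    {g : ℝ → ℝ} {T : ℝ} (hg : Function.Periodic g T) (hT : 0 < T) (hgc : Continuous g)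
    (hmean : ∫ x in 0..T, g x = 0) (k : ℕ) :
    Tendsto (fun t => (∫ x in 0..t, x ^ k * g x) / t ^ (k + 1)) atTop (𝓝 0) := by
  obtain ⟨M, hM⟩ := hg.exists_abs_intervalIntegral_le hT (hgc.intervalIntegrable _ _) hmean
  refine squeeze_zero_norm' ?_ (tendsto_const_nhds (x := 2 * M) |>.div_atTop tendsto_id)
  filter_upwards [eventually_gt_atTop 0] with t ht
  rw [Real.norm_eq_abs, abs_div, abs_of_pos (pow_pos ht _), id,
    div_le_div_iff₀ (by positivity) ht, pow_succ, ← mul_assoc]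
  exact mul_le_mul_of_nonneg_right (abs_integral_pow_mul_le hgc hM k ht.le) ht.le

theorem Function.Periodic.tendsto_integral_pow_mul_div_pow {f : ℝ → ℝ} {T : ℝ}
    (hf : Function.Periodic f T) (hT : 0 < T) (hfc : Continuous f) (k : ℕ) :
    Tendsto (fun t => (∫ x in 0..t, x ^ k * f x) / t ^ (k + 1)) atTop
      (𝓝 ((∫ x in 0..T, f x) / T / (k + 1))) := by
  set c := (∫ x in 0..T, f x) / T
  have hmean : ∫ x in 0..T, (f x - c) = 0 := by
    rw [integral_sub (hfc.intervalIntegrable _ _) intervalIntegrable_const,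
      intervalIntegral.integral_const]
    simp only [sub_zero, smul_eq_mul, c]
    field_simp
    ring
  have hper : Function.Periodic (fun x => f x - c) T := fun x => by simp only [hf x]
  have hzero := hper.tendsto_integral_pow_mul_div_pow_of_integral_eq_zero hT
    (hfc.sub continuous_const) hmean k
  have hsplit : ∀ t : ℝ, ∫ x in 0..t, x ^ k * f x
      = (∫ x in 0..t, x ^ k * (f x - c)) + c * t ^ (k + 1) / (k + 1) := by
    intro t
    simp_rw [mul_sub]
    rw [intervalIntegral.integral_sub (by apply Continuous.intervalIntegrable; fun_prop)
      (by apply Continuous.intervalIntegrable; fun_prop),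
      intervalIntegral.integral_mul_const, integral_pow]
    ring
  rw [← zero_add (c / _)]
  refine (hzero.add_const (c / (k + 1))).congr' ?_
  filter_upwards [eventually_gt_atTop 0] with t ht
  rw [hsplit]
  field_simp

theorem tendsto_natCast_mul_inv_sqrt_pow_sub {I K C : ℕ → ℝ} {a b : ℝ} (ha : 0 < a)
    (hI : Tendsto (fun n => I n / (n : ℝ) ^ 3) atTop (𝓝 a))
    (hK : Tendsto (fun n => K n / (n : ℝ) ^ 5) atTop (𝓝 b))
    (hC : Tendsto (fun n => C n / (n : ℝ) ^ 4) atTop (𝓝 0)) :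
    Tendsto (fun n : ℕ => (n : ℝ) * ((√(I n))⁻¹ ^ 4 * K n - ((√(I n))⁻¹ ^ 3 * C n) ^ 2))
      atTop (𝓝 (b / a ^ 2)) := by
  have hI' := hI.inv₀ ha.ne'
  have hlim := ((hI'.pow 2).mul hK).sub ((hI'.pow 3).mul (hC.pow 2))
  rw [zero_pow two_ne_zero, mul_zero, sub_zero, inv_pow, ← div_eq_inv_mul] at hlim
  refine hlim.congr' ?_
  filter_upwards [hI.eventually (lt_mem_nhds ha), eventually_gt_atTop 0] with n hIn hn
  have hn : (0 : ℝ) < n := by exact_mod_cast hn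
  have hIn : 0 < I n := (div_pos_iff_of_pos_right (pow_pos hn 3)).mp hIn
  have hs : √(I n) ^ 2 = I n := Real.sq_sqrt hIn.le
  have hs0 : 0 < √(I n) := Real.sqrt_pos.mpr hIn
  set s := √(I n)
  rw [← hs]
  field_simp

open Real

theorem tendsto_integral_pow_mul_comp_const_mul_div_pow {u : ℝ → ℝ} {P θ : ℝ}
    (hu : Function.Periodic u P) (huc : Continuous u) (hP : 0 < P) (hθ : 0 < θ) (k : ℕ) :
    Tendsto (fun n : ℕ => (∫ x in 0..(n : ℝ), x ^ k * u (θ * x)) / (n : ℝ) ^ (k + 1)) atTop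
      (𝓝 ((∫ x in 0..P / θ, u (θ * x)) / (P / θ) / (k + 1))) := by
  have hper : Function.Periodic (fun x => u (θ * x)) (P / θ) := by
    simpa only [div_eq_inv_mul] using hu.const_mul θ
  exact (hper.tendsto_integral_pow_mul_div_pow (by positivity) (by fun_prop) k).comp
    tendsto_natCast_atTop_atTop

theorem integral_sin_mul_cos_comp_mul_eq_zero {θ : ℝ} (hθ : θ ≠ 0) :
    ∫ x in 0..2 * π / θ, sin (θ * x) * cos (θ * x) = 0 := by
  rw [integral_comp_mul_left (fun y => sin y * cos y) hθ, mul_zero, mul_div_cancel₀ _ hθ]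
  simp

/-- Example 3, frequency parameter: for the intensity
`S(θ,x) = e^{sin(θx)}` on `[0,n]`, with `φ_n = (∫₀ⁿ x² cos²(θ₀x) e^{sin(θ₀x)})^{-1/2}` and
`J_n = φ_n⁴ ∫₀ⁿ x⁴ sin²(θ₀x) e^{sin(θ₀x)} − (φ_n³ ∫₀ⁿ x³ sin(θ₀x) cos(θ₀x))²`, one has
`lim n·J_n = (9τ/5)·(∫₀^τ sin²(θ₀x) e^{sin(θ₀x)})/(∫₀^τ cos²(θ₀x) e^{sin(θ₀x)})²`
where `τ = 2π/θ₀`. -/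
theorem statement_18 (θ₀ : ℝ) (hθ₀ : 0 < θ₀) :
    letI τ : ℝ := 2 * Real.pi / θ₀
    Tendsto (fun n : ℕ =>
      (n : ℝ) *
        ((Real.sqrt (∫ x in (0:ℝ)..(n:ℝ),
              x ^ 2 * Real.cos (θ₀ * x) ^ 2 * Real.exp (Real.sin (θ₀ * x))))⁻¹ ^ 4 *
            (∫ x in (0:ℝ)..(n:ℝ),
              x ^ 4 * Real.sin (θ₀ * x) ^ 2 * Real.exp (Real.sin (θ₀ * x))) -
          ((Real.sqrt (∫ x in (0:ℝ)..(n:ℝ),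
                x ^ 2 * Real.cos (θ₀ * x) ^ 2 * Real.exp (Real.sin (θ₀ * x))))⁻¹ ^ 3 *
              ∫ x in (0:ℝ)..(n:ℝ), x ^ 3 * Real.sin (θ₀ * x) * Real.cos (θ₀ * x)) ^ 2))
      atTop
      (nhds ((9 * τ / 5) *
        (∫ x in (0:ℝ)..τ, Real.sin (θ₀ * x) ^ 2 * Real.exp (Real.sin (θ₀ * x))) /
          (∫ x in (0:ℝ)..τ, Real.cos (θ₀ * x) ^ 2 * Real.exp (Real.sin (θ₀ * x))) ^ 2)) := by
  have hτ : 0 < 2 * π / θ₀ := by positivity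
  have hA : 0 < ∫ x in 0..2 * π / θ₀, cos (θ₀ * x) ^ 2 * exp (sin (θ₀ * x)) :=
    integral_pos hτ (by fun_prop) (fun x _ => by positivity) ⟨0, ⟨le_rfl, hτ.le⟩, by simp⟩
  have hI := tendsto_integral_pow_mul_comp_const_mul_div_pow
    (u := fun y => cos y ^ 2 * exp (sin y))
    (fun y => by simp only [sin_add_two_pi, cos_add_two_pi]) (by fun_prop) two_pi_pos hθ₀ 2
  have hK := tendsto_integral_pow_mul_comp_const_mul_div_pow
    (u := fun y => sin y ^ 2 * exp (sin y))
    (fun y => by simp only [sin_add_two_pi]) (by fun_prop) two_pi_pos hθ₀ 4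
  have hC := tendsto_integral_pow_mul_comp_const_mul_div_pow
    (u := fun y => sin y * cos y)
    (fun y => by simp only [sin_add_two_pi, cos_add_two_pi]) (by fun_prop) two_pi_pos hθ₀ 3
  rw [integral_sin_mul_cos_comp_mul_eq_zero hθ₀.ne', zero_div, zero_div] at hC
  simp only [← mul_assoc, Nat.reduceAdd] at hI hK hC
  have hlim := tendsto_natCast_mul_inv_sqrt_pow_sub (by positivity) hI hK hC
  convert hlim using 2
  field_simp
  ring
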